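/- Fix a real number λ and a nonnegative integer r. For each k ≥ 0 let 𝓔_{k,λ}(r) = Σ_{j=0}^{k} (−1/2)^j · j! · {k+r, j+r}_{r,λ} (the value at r of the degenerate Euler polynomial). Then for every n ≥ 0, n!/2^n = Σ_{k=0}^{n} (−1)^k [n+r, k+r]_{r,λ} 𝓔_{k,λ}(r). -/

import Mathlib

/-!
Substituting `x = -(y + r)` in the expansion of `⟨x + r⟩_n` turns rising into falling factorials,
and expanding each `(y + r)_{k,λ}` in the second expansion gives
`∑_j (∑_k (-1)^k [n+r, k+r] {k+r, j+r}) (y)_j = (-1)^n (y)_n`.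
Evaluating at `y = 0, 1, …, n` shows that expansions in the falling factorials `(y)_j`
have unique coefficients, so the inner sum is `(-1)^n δ_{jn}`: the signed degenerate Stirling numbers are
mutually inverse. The identity follows by expanding `𝓔_{k,λ}(r)` and swapping the two sums.
-/

open Finset

/-- The degenerate falling factorial `(x)_{n,λ} = x(x-λ)(x-2λ)⋯(x-(n-1)λ)`. -/
noncomputable def degFall (lam x : ℝ) (n : ℕ) : ℝ := ∏ i ∈ Finset.range n, (x - i * lam)

/-- The degenerate rising factorial `⟨x⟩_{n,λ} = x(x+λ)(x+2λ)⋯(x+(n-1)λ)`. -/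
noncomputable def degRise (lam x : ℝ) (n : ℕ) : ℝ := ∏ i ∈ Finset.range n, (x + i * lam)

lemma degRise_neg (lam x : ℝ) (n : ℕ) : degRise lam (-x) n = (-1) ^ n * degFall lam x n := by
  have hfactor : ∀ i ∈ range n, -x + i * lam = -1 * (x - i * lam) := fun i _ => by ring
  rw [degRise, degFall, prod_congr rfl hfactor, prod_mul_distrib, prod_const, card_range]

lemma degFall_one_natCast_of_lt {m n : ℕ} (h : m < n) : degFall 1 (m : ℝ) n = 0 :=
  prod_eq_zero (mem_range.mpr h) (by simp)

lemma degFall_one_natCast_self (m : ℕ) : degFall 1 (m : ℝ) m = m.factorial := by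
  rw [← Nat.descFactorial_self, Nat.descFactorial_eq_prod_range, Nat.cast_prod, degFall]
  refine prod_congr rfl fun i hi => ?_
  rw [Nat.cast_sub (mem_range.mp hi).le, mul_one]

lemma eq_of_sum_mul_degFall_one_natCast_eq {N : ℕ} {a b : ℕ → ℝ}
    (h : ∀ m : ℕ, ∑ j ∈ range N, a j * degFall 1 m j = ∑ j ∈ range N, b j * degFall 1 m j) :
    ∀ j < N, a j = b j := by
  intro j
  induction j using Nat.strong_induction_on with
  | _ j ih =>
    intro hj
    have hsum : ∀ c : ℕ → ℝ, (∀ i < j, c i = 0) →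
        ∑ i ∈ range N, c i * degFall 1 j i = c j * j.factorial := by
      intro c hc
      rw [sum_eq_single_of_mem j (mem_range.mpr hj), degFall_one_natCast_self]
      intro i _ hij
      rcases lt_or_gt_of_ne hij with hlt | hgt
      · rw [hc i hlt, zero_mul]
      · rw [degFall_one_natCast_of_lt hgt, mul_zero]
    have hdiff := hsum (fun i => a i - b i) fun i hi => sub_eq_zero.mpr (ih i hi (by omega))
    rw [sum_congr rfl fun i _ => sub_mul _ _ _, sum_sub_distrib, h j, sub_self] at hdiff
    exact sub_eq_zero.mp ((mul_eq_zero.mp hdiff.symm).resolve_right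
      (Nat.cast_ne_zero.mpr j.factorial_ne_zero))

/-- The `(n, j)` entry of the product of the lower triangular matrices `((-1)^k S₁ n k)` and
`(S₂ k j)`. -/
def signedComp (S₁ S₂ : ℕ → ℕ → ℝ) (n j : ℕ) : ℝ :=
  ∑ k ∈ Ico j (n + 1), (-1) ^ k * S₁ n k * S₂ k j

lemma sum_signed_mul_sum_eq_sum_signedComp (S₁ S₂ : ℕ → ℕ → ℝ) (n : ℕ) (f : ℕ → ℝ) :
    ∑ k ∈ range (n + 1), (-1) ^ k * S₁ n k * ∑ j ∈ range (k + 1), S₂ k j * f j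
      = ∑ j ∈ range (n + 1), signedComp S₁ S₂ n j * f j := by
  simp only [signedComp, mul_sum, sum_mul, range_eq_Ico]
  rw [sum_Ico_Ico_comm]
  exact sum_congr rfl fun j _ => sum_congr rfl fun k _ => by ring

section Inversion

variable {lam : ℝ} {r : ℕ} {S₁ S₂ : ℕ → ℕ → ℝ}
  (hS₁ : ∀ (n : ℕ) (x : ℝ), degRise 1 (x + r) n = ∑ k ∈ range (n + 1), S₁ n k * degRise lam x k)
  (hS₂ : ∀ (n : ℕ) (x : ℝ), degFall lam (x + r) n = ∑ k ∈ range (n + 1), S₂ n k * degFall 1 x k)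
include hS₁ hS₂

lemma sum_signedComp_mul_degFall (n : ℕ) (y : ℝ) :
    ∑ j ∈ range (n + 1), signedComp S₁ S₂ n j * degFall 1 y j = (-1) ^ n * degFall 1 y n := by
  have h := hS₁ n (-(y + r))
  rw [show -(y + r) + r = -y by ring, degRise_neg] at h
  rw [h, ← sum_signed_mul_sum_eq_sum_signedComp]
  exact sum_congr rfl fun k _ => by rw [degRise_neg, hS₂]; ring

lemma signedComp_eq_ite (n : ℕ) {j : ℕ} (hj : j ≤ n) :
    signedComp S₁ S₂ n j = if j = n then (-1) ^ n else 0 := by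
  refine eq_of_sum_mul_degFall_one_natCast_eq (a := signedComp S₁ S₂ n)
    (b := fun j => if j = n then (-1) ^ n else 0) (fun m => ?_) j (Nat.lt_succ_of_le hj)
  simp [sum_signedComp_mul_degFall hS₁ hS₂, ite_mul]

end Inversion

/-- With `𝓔_{k,λ}(r) = ∑_{j=0}^{k} (−1/2)^j j! {k+r,j+r}_{r,λ}` (the degenerate Euler
polynomial at `r`), we have `n!/2^n = ∑_{k=0}^{n} (−1)^k [n+r,k+r]_{r,λ} 𝓔_{k,λ}(r)`. -/
theorem degenerate_euler_identity (lam : ℝ) (r : ℕ) (S1 S2 : ℕ → ℕ → ℝ)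
    (hS1 : ∀ (n : ℕ) (x : ℝ),
      degRise 1 (x + r) n = ∑ k ∈ range (n + 1), S1 n k * degRise lam x k)
    (hS2 : ∀ (n : ℕ) (x : ℝ),
      degFall lam (x + r) n = ∑ k ∈ range (n + 1), S2 n k * degFall 1 x k)
    (E : ℕ → ℝ)
    (hE : ∀ k : ℕ, E k = ∑ j ∈ range (k + 1), (-1 / 2 : ℝ) ^ j * (Nat.factorial j : ℝ) * S2 k j) :
    ∀ n : ℕ, (Nat.factorial n : ℝ) / 2 ^ n
      = ∑ k ∈ range (n + 1), (-1 : ℝ) ^ k * S1 n k * E k := by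
  intro n
  have hE' : ∀ k, E k = ∑ j ∈ range (k + 1), S2 k j * ((-1 / 2 : ℝ) ^ j * j.factorial) :=
    fun k => (hE k).trans (sum_congr rfl fun j _ => mul_comm _ _)
  calc (n.factorial : ℝ) / 2 ^ n = (-1) ^ n * ((-1 / 2 : ℝ) ^ n * n.factorial) := by
        rw [← mul_assoc, ← mul_pow, show (-1 : ℝ) * (-1 / 2) = 2⁻¹ by norm_num, inv_pow,
          div_eq_inv_mul]
    _ = ∑ j ∈ range (n + 1),
          (if j = n then (-1) ^ n else 0) * ((-1 / 2 : ℝ) ^ j * j.factorial) := by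
        simp [ite_mul]
    _ = ∑ j ∈ range (n + 1), signedComp S1 S2 n j * ((-1 / 2 : ℝ) ^ j * j.factorial) :=
        sum_congr rfl fun j hj => by rw [signedComp_eq_ite hS1 hS2 n (mem_range_succ_iff.mp hj)]
    _ = ∑ k ∈ range (n + 1), (-1) ^ k * S1 n k * E k := by
        simp only [hE', sum_signed_mul_sum_eq_sum_signedComp]
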